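/- Let k be a field of characteristic p > 0 and let k((X)) be the field of formal Laurent series over k. Then the maximal perfect subfield of k((X)) equals the maximal perfect subfield of k, viewed inside k((X)) via the constant series; that is, (k((X)))^{p^∞} = k^{p^∞}. Concretely, if f = Σ_{n ≫ -∞} a_n X^n ∈ k((X)) lies in (k((X)))^{p^m} for every m ∈ ℕ, then a_n = 0 for all n ≠ 0 and a_0 ∈ k^{p^∞}. -/

import Mathlib

/-!
If `f ∈ k((X))` is a `pᵐ`-th power `g ^ pᵐ` for every `m`, then `pᵐ` divides the order of `f`
for every `m`, so `f` has order `0`, and its constant term is the `pᵐ`-th power of the leading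
coefficient of `g`. Since Frobenius is additive, `f - C (f.coeff 0)` is again a `pᵐ`-th power for
every `m`, hence also of order `0`; as its constant term vanishes, it must be zero.
-/

/-- For a field `k` of characteristic `p > 0`, the maximal perfect subfield
`k^{p^∞} = ⋂ₙ k^{pⁿ}`, where `k^{pⁿ}` is the image of the `n`-fold Frobenius `x ↦ x^{pⁿ}`. -/
noncomputable def maximalPerfectSubfield (p : ℕ) (k : Type*) [Field k] [Fact p.Prime]
    [CharP k p] : Subfield k :=
  ⨅ n : ℕ, (iterateFrobenius k p n).fieldRange

theorem mem_maximalPerfectSubfield_iff {p : ℕ} {K : Type*} [Field K] [Fact p.Prime] [CharP K p]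
    {x : K} : x ∈ maximalPerfectSubfield p K ↔ ∀ m : ℕ, ∃ y : K, y ^ p ^ m = x := by
  simp [maximalPerfectSubfield, Subfield.mem_iInf, RingHom.mem_fieldRange, iterateFrobenius_def]

theorem Int.eq_zero_of_forall_pow_dvd {a n : ℤ} (ha : a.natAbs ≠ 1) (h : ∀ m : ℕ, a ^ m ∣ n) :
    n = 0 := by
  by_contra hn
  exact FiniteMultiplicity.not_iff_forall.mpr h (Int.finiteMultiplicity_iff.mpr ⟨ha, hn⟩)

theorem HahnSeries.leadingCoeff_pow {Γ R : Type*} [AddCommMonoid Γ] [LinearOrder Γ]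
    [IsOrderedCancelAddMonoid Γ] [Semiring R] [NoZeroDivisors R] (x : HahnSeries Γ R) (n : ℕ) :
    (x ^ n).leadingCoeff = x.leadingCoeff ^ n := by
  induction n with
  | zero => simp
  | succ n ih => rw [pow_succ, leadingCoeff_mul, ih, pow_succ]

namespace LaurentSeries

open HahnSeries

variable {R : Type*} {p : ℕ}

section Semiring

variable [Semiring R] [NoZeroDivisors R] {f : LaurentSeries R}

theorem order_eq_zero_of_forall_pow_pow_eq (hp : p ≠ 1)
    (hf : ∀ m : ℕ, ∃ g : LaurentSeries R, g ^ p ^ m = f) : f.order = 0 := by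
  refine Int.eq_zero_of_forall_pow_dvd (a := p) (by simpa using hp) fun m ↦ ?_
  obtain ⟨g, rfl⟩ := hf m
  exact ⟨g.order, by simp⟩

theorem exists_pow_pow_eq_coeff_zero (hp : p ≠ 1)
    (hf : ∀ m : ℕ, ∃ g : LaurentSeries R, g ^ p ^ m = f) (m : ℕ) :
    ∃ a : R, a ^ p ^ m = f.coeff 0 := by
  obtain ⟨g, hg⟩ := hf m
  refine ⟨g.leadingCoeff, ?_⟩
  rw [← leadingCoeff_pow, hg, leadingCoeff_eq, order_eq_zero_of_forall_pow_pow_eq hp hf]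

end Semiring

theorem eq_C_coeff_zero_of_forall_pow_pow_eq [CommRing R] [IsDomain R] [Fact p.Prime]
    [CharP R p] {f : LaurentSeries R} (hf : ∀ m : ℕ, ∃ g : LaurentSeries R, g ^ p ^ m = f) :
    f = C (f.coeff 0) := by
  have : CharP (LaurentSeries R) p := charP_of_injective_ringHom (f := C) C_injective p
  have hp : p ≠ 1 := (Fact.out : p.Prime).ne_one
  have hroots : ∀ m : ℕ, ∃ g : LaurentSeries R, g ^ p ^ m = f - C (f.coeff 0) := fun m ↦ by
    obtain ⟨g, hg⟩ := hf m
    obtain ⟨a, ha⟩ := exists_pow_pow_eq_coeff_zero hp hf m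
    exact ⟨g - C a, by rw [sub_pow_char_pow, hg, ← map_pow, ha]⟩
  have hlead : (f - C (f.coeff 0)).leadingCoeff = 0 := by
    rw [leadingCoeff_eq, order_eq_zero_of_forall_pow_pow_eq hp hroots]
    simp
  exact sub_eq_zero.mp (leadingCoeff_eq_zero.mp hlead)

end LaurentSeries

/-- **Example 1.6** (key fact): for a field `k` of characteristic `p > 0`, the maximal perfect
subfield of the Laurent series field `k((X))` equals the maximal perfect subfield of `k`,
viewed inside `k((X))` via the constant-series embedding `C`.  Concretely, if
`f ∈ k((X))` is a `pᵐ`-th power for every `m`, then its coefficients `aₙ` vanish for all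
`n ≠ 0` and `a₀ ∈ k^{p^∞}`. -/
theorem maximalPerfectSubfield_laurentSeries (p : ℕ) [Fact p.Prime]
    (k : Type*) [Field k] [CharP k p] :
    letI : CharP (LaurentSeries k) p :=
      charP_of_injective_ringHom (f := (HahnSeries.C : k →+* LaurentSeries k))
        HahnSeries.C_injective p
    maximalPerfectSubfield p (LaurentSeries k)
        = (maximalPerfectSubfield p k).map (HahnSeries.C : k →+* LaurentSeries k) ∧
      ∀ f : LaurentSeries k, (∀ m : ℕ, ∃ g : LaurentSeries k, g ^ p ^ m = f) →
        (∀ n : ℤ, n ≠ 0 → f.coeff n = 0) ∧ ∀ m : ℕ, ∃ a : k, a ^ p ^ m = f.coeff 0 := by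
  let : CharP (LaurentSeries k) p :=
    charP_of_injective_ringHom (f := HahnSeries.C) HahnSeries.C_injective p
  have hp : p ≠ 1 := (Fact.out : p.Prime).ne_one
  refine ⟨?_, fun f hf ↦ ⟨fun n hn ↦ ?_, LaurentSeries.exists_pow_pow_eq_coeff_zero hp hf⟩⟩
  · ext f
    rw [mem_maximalPerfectSubfield_iff, Subfield.mem_map]
    constructor
    · intro hf
      refine ⟨f.coeff 0, ?_, (LaurentSeries.eq_C_coeff_zero_of_forall_pow_pow_eq hf).symm⟩
      exact mem_maximalPerfectSubfield_iff.mpr (LaurentSeries.exists_pow_pow_eq_coeff_zero hp hf)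
    · rintro ⟨a, ha, rfl⟩ m
      obtain ⟨b, hb⟩ := mem_maximalPerfectSubfield_iff.mp ha m
      exact ⟨HahnSeries.C b, by rw [← map_pow, hb]⟩
  · rw [LaurentSeries.eq_C_coeff_zero_of_forall_pow_pow_eq hf, HahnSeries.C_apply,
      HahnSeries.coeff_single_of_ne hn]
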